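/- Let q = (2e+1)·t with integers e ≥ 0 and t ≥ 2, and let C ⊆ Z_q^2 be a perfect e-code. Then C is standard: there exists i ∈ {1,2} such that c + (2e+1)·e_i ∈ C for every c ∈ C, where e_1 = (1,0) and e_2 = (0,1) in Z_q^2. -/

import Mathlib

/-- Lee distance on `ZMod q`. -/
def leeDist {q : ℕ} (x y : ZMod q) : ℕ := min (x - y).val (q - (x - y).val)

/-- Maximum (Chebyshev) distance on `(ZMod q)^n`. -/
def maxDist {q n : ℕ} (x y : Fin n → ZMod q) : ℕ :=
  Finset.univ.sup fun i => leeDist (x i) (y i)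

/-- `C` is a perfect `e`-code: every point is within distance `e` of exactly one codeword. -/
def IsPerfectCode {q n : ℕ} (e : ℕ) (C : Set (Fin n → ZMod q)) : Prop :=
  ∀ x : Fin n → ZMod q, ∃! c, c ∈ C ∧ maxDist x c ≤ e

/-!
The boxes of radius `e` around the codewords tile the torus `ℤ_q²` by squares of side
`s = 2e + 1`. Within one column the boxes meeting it stack on top of each other, so the
`j`-coordinates of codewords meeting a common column agree modulo `s`. If all codewords agree
modulo `s` in the `j`-coordinate, then every box has its neighbour in direction `i` at distance
exactly `s`, since the box covering `c + (e + 1)eᵢ` cannot be shifted vertically. Otherwise the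
`j`-residue changes between two adjacent columns, and that column boundary is a line that no box
crosses; translating it by `s` again gives such a line, so all `i`-coordinates agree modulo `s`
and the same argument applies with the roles of the coordinates exchanged.
-/

open AddSubgroup

lemma intCast_zmod_ne_zero {q : ℕ} {k : ℤ} (hk : k ≠ 0) (hkq : k.natAbs < q) :
    (k : ZMod q) ≠ 0 := fun h =>
  hk (Int.eq_zero_of_dvd_of_natAbs_lt_natAbs ((ZMod.intCast_zmod_eq_zero_iff_dvd k q).1 h)
    (by simpa using hkq))

lemma ZMod.exists_sub_one_and_not {q : ℕ} [NeZero q] {P : ZMod q → Prop} {x y : ZMod q}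
    (hx : P x) (hy : ¬ P y) : ∃ a, P (a - 1) ∧ ¬ P a := by
  by_contra! h
  have hP : ∀ n : ℕ, P (x + n) := by
    intro n
    induction n with
    | zero => simpa using hx
    | succ n ih => exact h _ (by rwa [Nat.cast_succ, ← add_assoc, add_sub_cancel_right])
  exact hy (by simpa using hP (y - x).val)

lemma leeDist_self {q : ℕ} (x : ZMod q) : leeDist x x = 0 := by
  simp [leeDist]

section LeeDist

variable {q : ℕ} [NeZero q]

lemma leeDist_eq_natAbs_valMinAbs (x y : ZMod q) :
    leeDist x y = (x - y).valMinAbs.natAbs :=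
  (ZMod.valMinAbs_natAbs_eq_min _).symm

lemma leeDist_le_iff {x y : ZMod q} {m : ℕ} :
    leeDist x y ≤ m ↔ ∃ k : ℤ, k.natAbs ≤ m ∧ x = y + k := by
  rw [leeDist_eq_natAbs_valMinAbs]
  constructor
  · exact fun h => ⟨_, h, by rw [ZMod.coe_valMinAbs, add_sub_cancel]⟩
  · rintro ⟨k, hk, rfl⟩
    rw [add_sub_cancel_left]
    exact (ZMod.natAbs_min_of_le_div_two q _ _ (ZMod.coe_valMinAbs _)
      (ZMod.natAbs_valMinAbs_le _)).trans hk

lemma leeDist_comm (x y : ZMod q) : leeDist x y = leeDist y x := by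
  rw [leeDist_eq_natAbs_valMinAbs, ← neg_sub, ZMod.natAbs_valMinAbs_neg,
    leeDist_eq_natAbs_valMinAbs]

lemma leeDist_triangle (x y z : ZMod q) : leeDist x z ≤ leeDist x y + leeDist y z := by
  simp only [leeDist_eq_natAbs_valMinAbs]
  rw [← sub_add_sub_cancel x y z]
  exact (ZMod.natAbs_valMinAbs_add_le _ _).trans (Int.natAbs_add_le _ _)

lemma leeDist_le_two_mul_of_le {e : ℕ} {a x y : ZMod q} (hx : leeDist a x ≤ e)
    (hy : leeDist a y ≤ e) : leeDist x y ≤ 2 * e := by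
  have := leeDist_triangle x a y
  rw [leeDist_comm x a] at this
  omega

lemma eq_add_of_leeDist_le_of_not_sub_one {e : ℕ} {a b : ZMod q} (h : leeDist a b ≤ e)
    (h' : ¬ leeDist (a - 1) b ≤ e) : b = a + e := by
  obtain ⟨k, hk, rfl⟩ := leeDist_le_iff.1 h
  have hke : k = -e := by
    by_contra hne
    exact h' (leeDist_le_iff.2 ⟨k - 1, by omega, by push_cast; ring⟩)
  rw [hke]
  push_cast
  ring

lemma eq_of_sub_mem_zmultiples {s : ℕ} (hs : s ∣ q) {x y : ZMod q}
    (h : x - y ∈ zmultiples (s : ZMod q)) (hd : leeDist x y < s) : x = y := by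
  obtain ⟨k, hk, rfl⟩ := leeDist_le_iff.1 (le_refl (leeDist x y))
  rw [add_sub_cancel_left] at h
  obtain ⟨m, hm⟩ := mem_zmultiples_iff.1 h
  -- reducing modulo `s` kills `zmultiples s`, while the offset `k` is too short to vanish
  have hks : (k : ZMod s) = 0 := by
    rw [← map_intCast (ZMod.castHom hs (ZMod s)), ← hm, map_zsmul, map_natCast,
      ZMod.natCast_self, smul_zero]
  have hk0 : k = 0 := by_contra fun hk0 => intCast_zmod_ne_zero hk0 (by omega) hks
  simp [hk0]

end LeeDist

lemma maxDist_le_iff {q n m : ℕ} {x y : Fin n → ZMod q} :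
    maxDist x y ≤ m ↔ ∀ k, leeDist (x k) (y k) ≤ m := by
  simp [maxDist]

lemma maxDist_le_iff_of_ne {q m : ℕ} {i j : Fin 2} (hij : i ≠ j) {x y : Fin 2 → ZMod q} :
    maxDist x y ≤ m ↔ leeDist (x i) (y i) ≤ m ∧ leeDist (x j) (y j) ≤ m := by
  rw [maxDist_le_iff]
  refine ⟨fun h => ⟨h i, h j⟩, fun ⟨hi, hj⟩ k => ?_⟩
  rcases (by omega : k = i ∨ k = j) with rfl | rfl
  exacts [hi, hj]

theorem IsPerfectCode.existsUnique_of_ne {q e : ℕ} {C : Set (Fin 2 → ZMod q)} {i j : Fin 2}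
    (hC : IsPerfectCode e C) (hij : i ≠ j) (a b : ZMod q) :
    ∃! c, c ∈ C ∧ leeDist a (c i) ≤ e ∧ leeDist b (c j) ≤ e := by
  simpa only [maxDist_le_iff_of_ne hij, Function.update_self, Function.update_of_ne hij.symm]
    using hC (Function.update (fun _ => b) i a)

def IsLeftEdge {q n : ℕ} (e : ℕ) (C : Set (Fin n → ZMod q)) (i : Fin n) (a : ZMod q) : Prop :=
  ∀ c ∈ C, leeDist a (c i) ≤ e → c i = a + e

section AnyDimension

variable {q n e : ℕ} [NeZero q] {C : Set (Fin n → ZMod q)}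

theorem IsPerfectCode.eq_of_maxDist_le (hC : IsPerfectCode e C) {c c' : Fin n → ZMod q}
    (hc : c ∈ C) (hc' : c' ∈ C) (h : maxDist c c' ≤ 2 * e) : c = c' := by
  choose d hd hcd using fun k => leeDist_le_iff.1 (maxDist_le_iff.1 h k)
  let mid : Fin n → ZMod q := fun k => c' k + ((d k / 2 : ℤ) : ZMod q)
  refine (hC mid).unique ⟨hc, maxDist_le_iff.2 fun k => leeDist_le_iff.2 ⟨d k / 2 - d k, ?_, ?_⟩⟩
    ⟨hc', maxDist_le_iff.2 fun k => leeDist_le_iff.2 ⟨d k / 2, ?_, rfl⟩⟩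
  · have := hd k; omega
  · simp only [mid, hcd k]; push_cast; ring
  · have := hd k; omega

namespace IsLeftEdge

variable {i : Fin n} {a : ZMod q}

theorem add_two_mul_add_one (ha : IsLeftEdge e C i a) (hC : IsPerfectCode e C)
    (hq : 2 * e + 1 < q) : IsLeftEdge e C i (a + (2 * e + 1 : ℕ)) := by
  intro c hc hcov
  refine eq_add_of_leeDist_le_of_not_sub_one hcov fun h => ?_
  rw [show a + ((2 * e + 1 : ℕ) : ZMod q) - 1 = a + 2 * e by push_cast; ring] at h
  obtain ⟨g, ⟨hg, hga⟩, -⟩ := hC (Function.update c i a)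
  have hgi : g i = a + e := ha g hg (by simpa using maxDist_le_iff.1 hga i)
  -- `c` and `g` both cover the point of the column `a + 2e` on the line of `c`
  have hcg : c = g := by
    refine (hC (Function.update c i (a + 2 * e))).unique ⟨hc, maxDist_le_iff.2 fun k => ?_⟩
      ⟨hg, maxDist_le_iff.2 fun k => ?_⟩
    · rcases eq_or_ne k i with rfl | hk
      · simpa using h
      · simp [hk, leeDist_self]
    · rcases eq_or_ne k i with rfl | hk
      · exact leeDist_le_iff.2 ⟨e, by simp, by simp [hgi]; ring⟩
      · simpa [hk] using maxDist_le_iff.1 hga k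
  obtain ⟨k, hk, hak⟩ := leeDist_le_iff.1 hcov
  have hzero : ((e + 1 - k : ℤ) : ZMod q) = 0 := by
    rw [hcg, hgi] at hak
    push_cast at hak ⊢
    linear_combination hak
  exact intCast_zmod_ne_zero (by omega) (by omega) hzero

theorem sub_mem_zmultiples (ha : IsLeftEdge e C i a) (hC : IsPerfectCode e C)
    (hq : 2 * e + 1 < q) {c c' : Fin n → ZMod q} (hc : c ∈ C) (hc' : c' ∈ C) :
    c i - c' i ∈ zmultiples ((2 * e + 1 : ℕ) : ZMod q) := by
  have hall : ∀ m : ℕ, IsLeftEdge e C i (a + ((m * (2 * e + 1) : ℕ) : ZMod q)) := by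
    intro m
    induction m with
    | zero => simpa using ha
    | succ m ih => simpa [add_mul, add_assoc] using ih.add_two_mul_add_one hC hq
  have hres : ∀ c ∈ C, c i - (a + e) ∈ zmultiples ((2 * e + 1 : ℕ) : ZMod q) := by
    intro c hc
    set x := (c i - a).val
    have hx : c i = a + x := by simp [x]
    set m := (x + e) / (2 * e + 1)
    have hdm : m * (2 * e + 1) + (x + e) % (2 * e + 1) = x + e := by
      rw [Nat.mul_comm]; exact Nat.div_add_mod _ _
    have hmod := Nat.mod_lt (x + e) (show 0 < 2 * e + 1 by omega)
    have hcov : leeDist (a + ((m * (2 * e + 1) : ℕ) : ZMod q)) (c i) ≤ e :=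
      leeDist_le_iff.2 ⟨(m * (2 * e + 1) : ℕ) - (x : ℤ), by omega, by rw [hx]; push_cast; ring⟩
    rw [hall m c hc hcov, add_right_comm, add_sub_cancel_left, Nat.cast_mul, ← nsmul_eq_mul]
    exact nsmul_mem (mem_zmultiples _) m
  simpa using sub_mem (hres c hc) (hres c' hc')

end IsLeftEdge

end AnyDimension

namespace IsPerfectCode

variable {q e : ℕ} [NeZero q] {C : Set (Fin 2 → ZMod q)} {i j : Fin 2}

theorem offset_eq_of_pos_of_le (hC : IsPerfectCode e C) (hij : i ≠ j) (hq : 2 * e < q)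
    {c c' : Fin 2 → ZMod q} (hc : c ∈ C) (hc' : c' ∈ C) (hi : leeDist (c i) (c' i) ≤ 2 * e)
    {r : ℤ} (hj : c' j = c j + r) (hr0 : 0 < r) (hr : r ≤ 2 * e + 1) : r = 2 * e + 1 := by
  by_contra hne
  have hcc' : c = c' := hC.eq_of_maxDist_le hc hc' ((maxDist_le_iff_of_ne hij).2
    ⟨hi, leeDist_le_iff.2 ⟨-r, by omega, by rw [hj]; push_cast; ring⟩⟩)
  subst hcc'
  exact intCast_zmod_ne_zero (q := q) (k := r) (by omega) (by omega) (by simpa using hj)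

theorem exists_mem_add_of_leeDist_le (hC : IsPerfectCode e C) (hij : i ≠ j) (hq : 2 * e < q)
    {c : Fin 2 → ZMod q} (hc : c ∈ C) {a : ZMod q} (ha : leeDist a (c i) ≤ e) :
    ∃ c' ∈ C, leeDist a (c' i) ≤ e ∧ c' j = c j + (2 * e + 1 : ℕ) := by
  obtain ⟨c', ⟨hc', hai, hbj⟩, -⟩ := hC.existsUnique_of_ne hij a (c j + (e + 1 : ℕ))
  obtain ⟨k, hk, hbk⟩ := leeDist_le_iff.1 hbj
  have hj : c' j = c j + ((e + 1 - k : ℤ) : ZMod q) := by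
    push_cast at hbk ⊢; linear_combination -hbk
  have hr := hC.offset_eq_of_pos_of_le hij hq hc hc' (leeDist_le_two_mul_of_le ha hai) hj
    (by omega) (by omega)
  exact ⟨c', hc', hai, by rw [hj, hr]; push_cast; ring⟩

theorem sub_mem_zmultiples_of_leeDist_le (hC : IsPerfectCode e C) (hij : i ≠ j)
    (hq : 2 * e < q) {a : ZMod q} {c c' : Fin 2 → ZMod q} (hc : c ∈ C) (hc' : c' ∈ C)
    (ha : leeDist a (c i) ≤ e) (ha' : leeDist a (c' i) ≤ e) :
    c' j - c j ∈ zmultiples ((2 * e + 1 : ℕ) : ZMod q) := by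
  -- climb from `c` to `c'` through the boxes stacked over the column `a`
  suffices key : ∀ n : ℕ, ∀ c ∈ C, leeDist a (c i) ≤ e → c' j = c j + ((n - e : ℤ) : ZMod q) →
      c' j - c j ∈ zmultiples ((2 * e + 1 : ℕ) : ZMod q) from
    key ((c' j - c j).val + e) c hc ha (by push_cast; simp)
  intro n
  induction n using Nat.strong_induction_on with
  | _ n ih =>
  intro c hc ha hn
  by_cases hsmall : n ≤ 2 * e
  · have hcc' : c = c' := hC.eq_of_maxDist_le hc hc' ((maxDist_le_iff_of_ne hij).2
      ⟨leeDist_le_two_mul_of_le ha ha',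
        leeDist_le_iff.2 ⟨e - n, by omega, by rw [hn]; push_cast; ring⟩⟩)
    simp [hcc']
  · obtain ⟨c'', hc'', ha'', hj⟩ := hC.exists_mem_add_of_leeDist_le hij hq hc ha
    have hstep := add_mem (ih (n - (2 * e + 1)) (by omega) c'' hc'' ha''
      (by rw [hn, hj]; push_cast [show 2 * e + 1 ≤ n by omega]; ring)) (mem_zmultiples _)
    rwa [hj, sub_add_eq_sub_sub, sub_add_cancel] at hstep

theorem add_single_mem (hC : IsPerfectCode e C) (hij : i ≠ j) (hq : 2 * e < q)
    (hs : 2 * e + 1 ∣ q)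
    (hcong : ∀ c ∈ C, ∀ c' ∈ C, c j - c' j ∈ zmultiples ((2 * e + 1 : ℕ) : ZMod q))
    {c : Fin 2 → ZMod q} (hc : c ∈ C) : c + Pi.single i ((2 * e + 1 : ℕ) : ZMod q) ∈ C := by
  obtain ⟨c', ⟨hc', hai, hbj⟩, -⟩ := hC.existsUnique_of_ne hij (c i + (e + 1 : ℕ)) (c j)
  have hj : c' j = c j :=
    eq_of_sub_mem_zmultiples hs (hcong c' hc' c hc) (by rw [leeDist_comm]; omega)
  obtain ⟨k, hk, hak⟩ := leeDist_le_iff.1 hai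
  have hi : c' i = c i + ((e + 1 - k : ℤ) : ZMod q) := by
    push_cast at hak ⊢; linear_combination -hak
  have hr := hC.offset_eq_of_pos_of_le hij.symm hq hc hc' (by simp [hj, leeDist_self]) hi
    (by omega) (by omega)
  convert hc' using 1
  ext k
  rcases (by omega : k = i ∨ k = j) with rfl | rfl
  · simp [hi, hr]
  · simp [hj, Pi.single_eq_of_ne hij.symm]

theorem exists_isLeftEdge (hC : IsPerfectCode e C) (hij : i ≠ j) (hq : 2 * e < q)
    {c₀ c₁ : Fin 2 → ZMod q} (h₀ : c₀ ∈ C) (h₁ : c₁ ∈ C)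
    (hne : c₁ j - c₀ j ∉ zmultiples ((2 * e + 1 : ℕ) : ZMod q)) : ∃ a, IsLeftEdge e C i a := by
  obtain ⟨a, hprev, hcur⟩ := ZMod.exists_sub_one_and_not
    (P := fun a => ∀ g ∈ C, leeDist a (g i) ≤ e →
      g j - c₀ j ∈ zmultiples ((2 * e + 1 : ℕ) : ZMod q))
    (x := c₀ i) (y := c₁ i)
    (fun g hg hcov =>
      hC.sub_mem_zmultiples_of_leeDist_le hij hq h₀ hg (by simp [leeDist_self]) hcov)
    (fun h => hne (h c₁ h₁ (by simp [leeDist_self])))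
  push Not at hcur
  obtain ⟨d, hd, hda, hdne⟩ := hcur
  refine ⟨a, fun g hg hga => eq_add_of_leeDist_le_of_not_sub_one hga fun hga' => hdne ?_⟩
  simpa using add_mem (hC.sub_mem_zmultiples_of_leeDist_le hij hq hg hd hga hda)
    (hprev g hg hga')

end IsPerfectCode

/-- Every two-dimensional perfect code in the maximum metric is standard. -/
theorem stmt2 (e t q : ℕ) (ht : 2 ≤ t) (hq : q = (2 * e + 1) * t)
    (C : Set (Fin 2 → ZMod q)) (hC : IsPerfectCode e C) :
    ∃ i : Fin 2, ∀ c ∈ C, c + Pi.single i ((2 * e + 1 : ℕ) : ZMod q) ∈ C := by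
  have : NeZero q := ⟨by rw [hq]; positivity⟩
  have hs : 2 * e + 1 ∣ q := ⟨t, hq⟩
  have hq' : 2 * e + 1 < q := by rw [hq]; nlinarith
  by_cases hcong : ∀ c ∈ C, ∀ c' ∈ C, c 1 - c' 1 ∈ zmultiples ((2 * e + 1 : ℕ) : ZMod q)
  · exact ⟨0, fun c hc => hC.add_single_mem (by decide) (by omega) hs hcong hc⟩
  · push Not at hcong
    obtain ⟨c₁, h₁, c₀, h₀, hne⟩ := hcong
    obtain ⟨a, ha⟩ := hC.exists_isLeftEdge (i := 0) (by decide) (by omega) h₀ h₁ hne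
    exact ⟨1, fun c hc => hC.add_single_mem (by decide) (by omega) hs
      (fun _ hc _ hc' => ha.sub_mem_zmultiples hC hq' hc hc') hc⟩
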